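/- arXiv:1909.07851 — 4 statements merged into one kernel-verified Lean document; each statement's English description precedes it below -/
import Mathlib

section
/- Let H ∈ ℝ^{N×N} be symmetric positive definite and S(ω) ∈ ℝ^{m×m} be skew-symmetric. Consider the coupled system η̃' = (I_N ⊗ S(ω) - μ₁ H ⊗ I_m) η̃ + S_d(ω̃) η and ω̃' = μ₂ φ_d(e_v) η, where e_v = -(H ⊗ I_m) η̃. Then the function V(η̃, ω̃) = ½(η̃ᵀ (H ⊗ I_m) η̃ + μ₂⁻¹ ω̃ᵀ ω̃) satisfies, along trajectories, V̇ = -μ₁ η̃ᵀ (H² ⊗ I_m) η̃ ≤ 0, for any μ₁, μ₂ > 0. -/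
open Matrix Kronecker

noncomputable def a2 : Matrix (Fin 2) (Fin 2) ℝ := !![0, 1; -1, 0]

/-- `S(z) = diag(z) ⊗ a`, indexed by `Fin l × Fin 2`. -/
noncomputable def Smat {l : ℕ} (z : Fin l → ℝ) :
    Matrix (Fin l × Fin 2) (Fin l × Fin 2) ℝ :=
  (Matrix.diagonal z) ⊗ₖ a2

/-- `φ(x) ∈ ℝ^{l×m}`. -/
noncomputable def phiMat {l : ℕ} (x : Fin l × Fin 2 → ℝ) :
    Matrix (Fin l) (Fin l × Fin 2) ℝ :=
  Matrix.of fun i jk =>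
    if jk.1 = i then (if jk.2 = 0 then -x (i, 1) else x (i, 0)) else 0

/-- Block-diagonal `S_d(ω̃) = blockdiag (S(ω̃₁),…,S(ω̃_N))`. -/
noncomputable def Sd {N l : ℕ} (w : Fin N × Fin l → ℝ) :
    Matrix (Fin N × (Fin l × Fin 2)) (Fin N × (Fin l × Fin 2)) ℝ :=
  Matrix.of fun ip jq =>
    if ip.1 = jq.1 then Smat (fun k => w (ip.1, k)) ip.2 jq.2 else 0

/-- Block-diagonal `φ_d(e_v) = blockdiag (φ(e_{v1}),…,φ(e_{vN}))`. -/
noncomputable def phid {N l : ℕ} (e : Fin N × (Fin l × Fin 2) → ℝ) :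
    Matrix (Fin N × Fin l) (Fin N × (Fin l × Fin 2)) ℝ :=
  Matrix.of fun ik jq =>
    if ik.1 = jq.1 then phiMat (fun p => e (ik.1, p)) ik.2 jq.2 else 0

/-- key entry-level identity: `e ⬝ S_d(w) η = w ⬝ φ_d(e) η`. -/
lemma key_id {N l : ℕ} (w : Fin N × Fin l → ℝ) (e η : Fin N × (Fin l × Fin 2) → ℝ) :
    e ⬝ᵥ (Sd w).mulVec η = w ⬝ᵥ (phid e).mulVec η := by
  simp only [dotProduct, mulVec, Sd, phid, Smat, phiMat, a2, Matrix.of_apply,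
    kroneckerMap_apply, Matrix.diagonal_apply, Fintype.sum_prod_type, Fin.sum_univ_two]
  simp [Finset.mul_sum, Finset.sum_ite_eq, Finset.sum_ite_eq', mul_ite]
  ring_nf
  simp only [Finset.mul_sum, mul_add, mul_ite, mul_zero, Finset.sum_add_distrib,
    Finset.sum_ite_irrel, Finset.sum_const_zero, Finset.sum_ite_eq, Finset.sum_ite_eq']
  simp
  ring_nf
  rw [sub_eq_neg_add]
  congr 1
  exact Finset.sum_congr rfl fun i _ => Finset.sum_congr rfl fun k _ => by ring

lemma hasDerivAt_dot {n : Type*} [Fintype n] {f g : ℝ → n → ℝ} {f' g' : n → ℝ} {t : ℝ}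
    (hf : HasDerivAt f f' t) (hg : HasDerivAt g g' t) :
    HasDerivAt (fun τ => f τ ⬝ᵥ g τ) (f' ⬝ᵥ g t + f t ⬝ᵥ g') t := by
  have h : HasDerivAt (fun τ => ∑ i : n, f τ i * g τ i)
      (∑ i : n, (f' i * g t i + f t i * g' i)) t :=
    HasDerivAt.fun_sum fun i _ => (hasDerivAt_pi.1 hf i).mul (hasDerivAt_pi.1 hg i)
  simpa [dotProduct, Finset.sum_add_distrib] using h

lemma hasDerivAt_mulVec {m n : Type*} [Fintype m] [Fintype n] (A : Matrix m n ℝ) {f : ℝ → n → ℝ}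
    {f' : n → ℝ} {t : ℝ} (hf : HasDerivAt f f' t) :
    HasDerivAt (fun τ => A.mulVec (f τ)) (A.mulVec f') t := by
  refine hasDerivAt_pi.2 fun i => ?_
  have h : HasDerivAt (fun τ => ∑ j : n, A i j * f τ j) (∑ j : n, A i j * f' j) t :=
    HasDerivAt.fun_sum fun j _ => (hasDerivAt_pi.1 hf j).const_mul (A i j)
  simpa [mulVec, dotProduct] using h

lemma skew_quad {n : Type*} [Fintype n] (M : Matrix n n ℝ) (hM : Mᵀ = -M) (v : n → ℝ) :
    v ⬝ᵥ M.mulVec v = 0 := by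
  have h1 : v ⬝ᵥ M.mulVec v = (Mᵀ.mulVec v) ⬝ᵥ v := by
    rw [dotProduct_mulVec, Matrix.mulVec_transpose]
  rw [hM] at h1
  have h2 : ((-M).mulVec v) ⬝ᵥ v = -(M.mulVec v ⬝ᵥ v) := by
    simp [Matrix.neg_mulVec]
  rw [h2, dotProduct_comm] at h1
  rw [dotProduct_comm]
  linarith

theorem stmt5 {N l : ℕ} (hN : 0 < N) (hl : 0 < l)
    (H : Matrix (Fin N) (Fin N) ℝ) (hH : H.PosDef) (hHsymm : Hᵀ = H)
    (ω : Fin l → ℝ) (μ₁ μ₂ : ℝ) (hμ₁ : 0 < μ₁) (hμ₂ : 0 < μ₂)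
    (ηt ηtil : ℝ → Fin N × (Fin l × Fin 2) → ℝ)
    (ωtil : ℝ → Fin N × Fin l → ℝ)
    (ev : ℝ → Fin N × (Fin l × Fin 2) → ℝ)
    (hev : ∀ t, ev t = -((H ⊗ₖ (1 : Matrix (Fin l × Fin 2) (Fin l × Fin 2) ℝ)).mulVec (ηtil t)))
    (hηtil : ∀ t, HasDerivAt ηtil
      ((((1 : Matrix (Fin N) (Fin N) ℝ) ⊗ₖ Smat ω)
          - μ₁ • (H ⊗ₖ (1 : Matrix (Fin l × Fin 2) (Fin l × Fin 2) ℝ))).mulVec (ηtil t)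
        + (Sd (ωtil t)).mulVec (ηt t)) t)
    (hωtil : ∀ t, HasDerivAt ωtil (μ₂ • (phid (ev t)).mulVec (ηt t)) t) :
    ∀ t : ℝ,
      HasDerivAt (fun τ => (1 / 2 : ℝ) *
          ((ηtil τ) ⬝ᵥ (H ⊗ₖ (1 : Matrix (Fin l × Fin 2) (Fin l × Fin 2) ℝ)).mulVec (ηtil τ)
            + μ₂⁻¹ * ((ωtil τ) ⬝ᵥ (ωtil τ))))
        (-μ₁ * ((ηtil t) ⬝ᵥ ((H * H) ⊗ₖ (1 : Matrix (Fin l × Fin 2) (Fin l × Fin 2) ℝ)).mulVec (ηtil t))) t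
      ∧ -μ₁ * ((ηtil t) ⬝ᵥ ((H * H) ⊗ₖ (1 : Matrix (Fin l × Fin 2) (Fin l × Fin 2) ℝ)).mulVec (ηtil t)) ≤ 0 := by
  intro t
  set A : Matrix (Fin N × (Fin l × Fin 2)) (Fin N × (Fin l × Fin 2)) ℝ :=
    H ⊗ₖ (1 : Matrix (Fin l × Fin 2) (Fin l × Fin 2) ℝ) with hA
  set B : Matrix (Fin N × (Fin l × Fin 2)) (Fin N × (Fin l × Fin 2)) ℝ :=
    (1 : Matrix (Fin N) (Fin N) ℝ) ⊗ₖ Smat ω with hB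
  set x := ηtil t
  set x' := (B - μ₁ • A).mulVec x + (Sd (ωtil t)).mulVec (ηt t) with hx'
  set w := ωtil t
  set w' := μ₂ • (phid (ev t)).mulVec (ηt t) with hw'
  -- transposes
  have hAT : Aᵀ = A := by
    rw [hA, ← Matrix.kroneckerMap_transpose, hHsymm, Matrix.transpose_one]
  have ha2T : a2ᵀ = -a2 := by
    ext i j; fin_cases i <;> fin_cases j <;> simp [a2]
  have hST : (Smat ω)ᵀ = -(Smat ω) := by
    rw [Smat, ← Matrix.kroneckerMap_transpose, Matrix.diagonal_transpose, ha2T]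
    ext ⟨i, a⟩ ⟨j, b⟩
    simp [Matrix.kroneckerMap_apply]
  -- skewness of Bᵀ * A
  have hM : (Bᵀ * A)ᵀ = -(Bᵀ * A) := by
    have h1 : Bᵀ * A = H ⊗ₖ (Smat ω)ᵀ := by
      rw [hB, hA, ← Matrix.kroneckerMap_transpose, Matrix.transpose_one,
        ← Matrix.mul_kronecker_mul, one_mul, mul_one]
    rw [h1, ← Matrix.kroneckerMap_transpose, hHsymm, Matrix.transpose_transpose, hST]
    ext ⟨i, a⟩ ⟨j, b⟩
    simp [Matrix.kroneckerMap_apply]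
  -- the derivative of V
  have hd : HasDerivAt (fun τ => (1 / 2 : ℝ) *
      ((ηtil τ) ⬝ᵥ A.mulVec (ηtil τ) + μ₂⁻¹ * ((ωtil τ) ⬝ᵥ (ωtil τ))))
      ((1 / 2 : ℝ) * ((x' ⬝ᵥ A.mulVec x + x ⬝ᵥ A.mulVec x')
        + μ₂⁻¹ * (w' ⬝ᵥ w + w ⬝ᵥ w'))) t := by
    have h1 : HasDerivAt (fun τ => (ηtil τ) ⬝ᵥ A.mulVec (ηtil τ))
        (x' ⬝ᵥ A.mulVec x + x ⬝ᵥ A.mulVec x') t :=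
      hasDerivAt_dot (hηtil t) (hasDerivAt_mulVec A (hηtil t))
    have h2 : HasDerivAt (fun τ => (ωtil τ) ⬝ᵥ (ωtil τ)) (w' ⬝ᵥ w + w ⬝ᵥ w') t :=
      hasDerivAt_dot (hωtil t) (hωtil t)
    exact ((h1.add (h2.const_mul μ₂⁻¹)).const_mul (1 / 2 : ℝ))
  -- symmetry simplifications
  have hsym : x ⬝ᵥ A.mulVec x' = x' ⬝ᵥ A.mulVec x := by
    rw [dotProduct_mulVec, ← Matrix.mulVec_transpose, hAT, dotProduct_comm]
  have hwsym : w ⬝ᵥ w' = w' ⬝ᵥ w := dotProduct_comm _ _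
  -- compute x' ⬝ᵥ A x
  have hBterm : (B.mulVec x) ⬝ᵥ (A.mulVec x) = 0 := by
    have h2 : x ⬝ᵥ (Bᵀ * A).mulVec x = (B.mulVec x) ⬝ᵥ (A.mulVec x) := by
      rw [← Matrix.mulVec_mulVec, dotProduct_mulVec, ← Matrix.mulVec_transpose,
        Matrix.transpose_transpose]
    rw [← h2, skew_quad _ hM]
  have hAAterm : (A.mulVec x) ⬝ᵥ (A.mulVec x)
      = x ⬝ᵥ ((H * H) ⊗ₖ (1 : Matrix (Fin l × Fin 2) (Fin l × Fin 2) ℝ)).mulVec x := by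
    have h1 : Aᵀ * A = (H * H) ⊗ₖ (1 : Matrix (Fin l × Fin 2) (Fin l × Fin 2) ℝ) := by
      rw [hAT, hA, ← Matrix.mul_kronecker_mul, one_mul]
    have h2 : x ⬝ᵥ (Aᵀ * A).mulVec x = (A.mulVec x) ⬝ᵥ (A.mulVec x) := by
      rw [← Matrix.mulVec_mulVec, dotProduct_mulVec, ← Matrix.mulVec_transpose,
        Matrix.transpose_transpose]
    rw [← h1, h2]
  have hSdterm : ((Sd (ωtil t)).mulVec (ηt t)) ⬝ᵥ (A.mulVec x)
      = -((ev t) ⬝ᵥ (Sd (ωtil t)).mulVec (ηt t)) := by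
    rw [hev t, dotProduct_comm]
    simp [hA]
    rfl
  have hwterm : μ₂⁻¹ * (w' ⬝ᵥ w) = (ωtil t) ⬝ᵥ (phid (ev t)).mulVec (ηt t) := by
    rw [hw', smul_dotProduct, dotProduct_comm]
    field_simp
    rfl
  -- combine
  have hfinal : (1 / 2 : ℝ) * ((x' ⬝ᵥ A.mulVec x + x ⬝ᵥ A.mulVec x')
        + μ₂⁻¹ * (w' ⬝ᵥ w + w ⬝ᵥ w'))
      = -μ₁ * (x ⬝ᵥ ((H * H) ⊗ₖ (1 : Matrix (Fin l × Fin 2) (Fin l × Fin 2) ℝ)).mulVec x) := by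
    have hexp : x' ⬝ᵥ A.mulVec x
        = -(ev t ⬝ᵥ (Sd (ωtil t)).mulVec (ηt t))
          - μ₁ * (x ⬝ᵥ ((H * H) ⊗ₖ (1 : Matrix (Fin l × Fin 2) (Fin l × Fin 2) ℝ)).mulVec x) := by
      rw [hx', add_dotProduct, Matrix.sub_mulVec, sub_dotProduct, Matrix.smul_mulVec,
        smul_dotProduct, hBterm, hSdterm, hAAterm]
      simp [smul_eq_mul]
      ring
    calc (1 / 2 : ℝ) * ((x' ⬝ᵥ A.mulVec x + x ⬝ᵥ A.mulVec x')
          + μ₂⁻¹ * (w' ⬝ᵥ w + w ⬝ᵥ w'))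
        = x' ⬝ᵥ A.mulVec x + μ₂⁻¹ * (w' ⬝ᵥ w) := by rw [hsym, hwsym]; ring
      _ = -μ₁ * (x ⬝ᵥ ((H * H) ⊗ₖ (1 : Matrix (Fin l × Fin 2) (Fin l × Fin 2) ℝ)).mulVec x) := by
          rw [hexp, hwterm, key_id (ωtil t) (ev t) (ηt t)]
          ring
  rw [← hfinal]
  constructor
  · exact hd
  · rw [hfinal]
    have hnn : 0 ≤ x ⬝ᵥ ((H * H) ⊗ₖ (1 : Matrix (Fin l × Fin 2) (Fin l × Fin 2) ℝ)).mulVec x := by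
      rw [← hAAterm]
      exact Finset.sum_nonneg fun i _ => mul_self_nonneg _
    nlinarith
end

section
/- Suppose g : [0,∞) → ℝ^n is continuously differentiable, f : [0,∞) → ℝ^n is bounded and piecewise continuous, lim_{t→∞} gᵀ(t) f(t) = 0, lim_{t→∞} g'(t) = 0, and f is persistently exciting. Then lim_{t→∞} g(t) = 0. -/
open Matrix Filter intervalIntegral

/-- A bounded piecewise continuous `f : [0,∞) → ℝ^n` is persistently exciting if there are
`ε > 0`, `t₀ ≥ 0`, `T₀ > 0` with `(1/T₀) ∫_t^{t+T₀} f(s) f(s)ᵀ ds ⪰ ε I` for all `t ≥ t₀`. -/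
def IsPE {ι : Type*} [Fintype ι] [DecidableEq ι] (f : ℝ → ι → ℝ) : Prop :=
  ∃ ε > (0 : ℝ), ∃ t₀ ≥ (0 : ℝ), ∃ T₀ > (0 : ℝ), ∀ t ≥ t₀,
    Matrix.PosSemidef
      ((Matrix.of fun i j => T₀⁻¹ * ∫ s in t..(t + T₀), f s i * f s j)
        - ε • (1 : Matrix ι ι ℝ))

/-! Since `g' → 0`, `g` is nearly constant on every window `[t, t + T₀]` once `t` is large, so
`g t ⬝ᵥ f s` is uniformly small there because `g s ⬝ᵥ f s` is. Integrating its square over the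
window, persistent excitation bounds `ε ‖g t‖²` by that small quantity. -/

open MeasureTheory Set

theorem aestronglyMeasurable_of_continuousAt_of_countable {α β : Type*} [TopologicalSpace α]
    [MeasurableSpace α] [OpensMeasurableSpace α] [MeasurableSingletonClass α] [TopologicalSpace β]
    [TopologicalSpace.PseudoMetrizableSpace β]
    [SecondCountableTopologyEither α β] {μ : Measure α} [NullSingletonClass μ] {f : α → β}
    {D : Set α} (hD : D.Countable) (hf : ∀ t ∉ D, ContinuousAt f t) :
    AEStronglyMeasurable f μ := by
  have hcont : ContinuousOn f Dᶜ := fun t ht => (hf t ht).continuousWithinAt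
  rw [← Measure.restrict_eq_self_of_ae_mem (hD.ae_notMem μ)]
  exact hcont.aestronglyMeasurable hD.measurableSet.compl

theorem intervalIntegrable_of_norm_le_on_Ici {E : Type*} [NormedAddCommGroup E] {h : ℝ → E}
    {M a b : ℝ} (hh : AEStronglyMeasurable h) (hM : ∀ t ≥ 0, ‖h t‖ ≤ M) (ha : 0 ≤ a)
    (hb : 0 ≤ b) : IntervalIntegrable h volume a b :=
  (intervalIntegrable_const (c := M)).mono_fun' hh.restrict <|
    ae_restrict_of_forall_mem measurableSet_uIoc fun s hs =>
      hM s ((le_min ha hb).trans hs.1.le)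

theorem Matrix.abs_dotProduct_le {ι : Type*} [Fintype ι] (x y : ι → ℝ) :
    |x ⬝ᵥ y| ≤ Fintype.card ι * (‖x‖ * ‖y‖) := by
  calc |x ⬝ᵥ y| ≤ ∑ i, |x i * y i| := Finset.abs_sum_le_sum_abs _ _
    _ ≤ ∑ _i : ι, ‖x‖ * ‖y‖ := Finset.sum_le_sum fun i _ => by
        rw [abs_mul]
        exact mul_le_mul (norm_le_pi_norm x i) (norm_le_pi_norm y i) (abs_nonneg _)
          (norm_nonneg _)
    _ = Fintype.card ι * (‖x‖ * ‖y‖) := by simp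

theorem Matrix.sq_norm_le_dotProduct_self {ι : Type*} [Fintype ι] (x : ι → ℝ) :
    ‖x‖ ^ 2 ≤ x ⬝ᵥ x := by
  have hsum : x ⬝ᵥ x = ∑ i, x i ^ 2 := by simp [dotProduct, sq]
  have hle : ‖x‖ ≤ √(x ⬝ᵥ x) := (pi_norm_le_iff_of_nonneg (Real.sqrt_nonneg _)).2 fun i =>
    Real.abs_le_sqrt <| hsum ▸ Finset.single_le_sum (fun j _ => sq_nonneg (x j))
      (Finset.mem_univ i)
  calc ‖x‖ ^ 2 ≤ √(x ⬝ᵥ x) ^ 2 := pow_le_pow_left₀ (norm_nonneg x) hle 2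
    _ = x ⬝ᵥ x := Real.sq_sqrt (hsum ▸ Finset.sum_nonneg fun i _ => sq_nonneg (x i))

theorem Matrix.dotProduct_mulVec_intervalIntegral_gram {ι : Type*} [Fintype ι] {h : ℝ → ι → ℝ}
    {μ : Measure ℝ} {a b : ℝ} (hint : ∀ i j, IntervalIntegrable (fun s => h s i * h s j) μ a b)
    (v : ι → ℝ) :
    v ⬝ᵥ (of (fun i j => ∫ s in a..b, h s i * h s j ∂μ) *ᵥ v) = ∫ s in a..b, (v ⬝ᵥ h s) ^ 2 ∂μ := by
  have hexpand : ∀ s, (v ⬝ᵥ h s) ^ 2 = ∑ i, ∑ j, v i * v j * (h s i * h s j) := fun s => by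
    rw [sq, dotProduct, Finset.sum_mul_sum]
    exact Finset.sum_congr rfl fun i _ => Finset.sum_congr rfl fun j _ => by ring
  have hint' : ∀ i j, IntervalIntegrable (fun s => v i * v j * (h s i * h s j)) μ a b :=
    fun i j => (hint i j).const_mul _
  simp_rw [hexpand]
  rw [integral_finsetSum fun i _ => by
    simpa only [Finset.sum_fn] using IntervalIntegrable.sum _ fun j _ => hint' i j]
  simp only [dotProduct, mulVec, of_apply, Finset.mul_sum]
  refine Finset.sum_congr rfl fun i _ => ?_
  rw [integral_finsetSum fun j _ => hint' i j]
  exact Finset.sum_congr rfl fun j _ => by rw [intervalIntegral.integral_const_mul]; ring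

theorem IsPE.exists_mul_sq_norm_le {ι : Type*} [Fintype ι] [DecidableEq ι] {f : ℝ → ι → ℝ}
    {M : ℝ} (hPE : IsPE f) (hf : AEStronglyMeasurable f) (hM : ∀ t ≥ 0, ‖f t‖ ≤ M) :
    ∃ ε > 0, ∃ t₀ T₀ : ℝ, 0 < T₀ ∧ ∀ t ≥ t₀, ∀ (v : ι → ℝ) (δ : ℝ),
      (∀ s ∈ Icc t (t + T₀), |v ⬝ᵥ f s| ≤ δ) → ε * ‖v‖ ^ 2 ≤ δ ^ 2 := by
  obtain ⟨ε, hε, t₀, ht₀, T₀, hT₀, hpsd⟩ := hPE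
  refine ⟨ε, hε, t₀, T₀, hT₀, fun t ht v δ hv => ?_⟩
  have hcoord (i : ι) : AEStronglyMeasurable (fun s => f s i) :=
    (continuous_apply i).comp_aestronglyMeasurable hf
  have hint : ∀ i j, IntervalIntegrable (fun s => f s i * f s j) volume t (t + T₀) :=
    fun i j => intervalIntegrable_of_norm_le_on_Ici (M := M * M) ((hcoord i).mul (hcoord j))
      (fun s hs => by
        rw [norm_mul]
        exact mul_le_mul (norm_le_pi_norm _ i |>.trans (hM s hs))
          (norm_le_pi_norm _ j |>.trans (hM s hs)) (norm_nonneg _)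
          ((norm_nonneg _).trans (hM s hs)))
      (by linarith) (by linarith)
  have hquad : ε * (v ⬝ᵥ v) ≤ T₀⁻¹ * ∫ s in t..(t + T₀), (v ⬝ᵥ f s) ^ 2 := by
    have h := (posSemidef_iff_dotProduct_mulVec.1 (hpsd t ht)).2 v
    have hG : (of fun i j => T₀⁻¹ * ∫ s in t..(t + T₀), f s i * f s j)
        = T₀⁻¹ • of fun i j => ∫ s in t..(t + T₀), f s i * f s j := rfl
    rw [hG, sub_mulVec, smul_mulVec, smul_mulVec, dotProduct_sub, dotProduct_smul,
      dotProduct_smul, one_mulVec, star_trivial, dotProduct_mulVec_intervalIntegral_gram hint] at h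
    simpa [sub_nonneg] using h
  have hwindow : ∫ s in t..(t + T₀), (v ⬝ᵥ f s) ^ 2 ≤ δ ^ 2 * T₀ := by
    have hbound : ∀ s ∈ uIoc t (t + T₀), ‖(v ⬝ᵥ f s) ^ 2‖ ≤ δ ^ 2 := fun s hs => by
      rw [uIoc_of_le (by linarith)] at hs
      rw [norm_pow, Real.norm_eq_abs]
      exact pow_le_pow_left₀ (abs_nonneg _) (hv s (Ioc_subset_Icc_self hs)) 2
    have := (le_abs_self _).trans (norm_integral_le_of_norm_le_const hbound)
    rwa [add_sub_cancel_left, abs_of_pos hT₀] at this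
  calc ε * ‖v‖ ^ 2 ≤ ε * (v ⬝ᵥ v) := mul_le_mul_of_nonneg_left (sq_norm_le_dotProduct_self v) hε.le
    _ ≤ T₀⁻¹ * (δ ^ 2 * T₀) := hquad.trans (mul_le_mul_of_nonneg_left hwindow (by positivity))
    _ = δ ^ 2 := by field_simp

theorem eventually_forall_Icc_abs_dotProduct_le {ι : Type*} [Fintype ι] {g g' f : ℝ → ι → ℝ}
    {M T δ : ℝ} (hg : ∀ t, HasDerivAt g (g' t) t) (hM : ∀ t ≥ 0, ‖f t‖ ≤ M)
    (hgf : Tendsto (fun t => g t ⬝ᵥ f t) atTop (nhds 0)) (hg'lim : Tendsto g' atTop (nhds 0))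
    (hT : 0 ≤ T) (hδ : 0 < δ) :
    ∀ᶠ t in atTop, ∀ s ∈ Icc t (t + T), |g t ⬝ᵥ f s| ≤ δ := by
  have hM0 : 0 ≤ M := (norm_nonneg _).trans (hM 0 le_rfl)
  set K := Fintype.card ι * M * T
  have hK : 0 ≤ K := by positivity
  set η := δ / (2 * (K + 1))
  have hKη : K * η ≤ δ / 2 := by
    rw [mul_div_assoc', div_le_div_iff₀ (by positivity) two_pos]
    nlinarith
  have hgf' : ∀ᶠ t in atTop, ∀ s ≥ t, |g s ⬝ᵥ f s| ≤ δ / 2 :=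
    eventually_forall_ge_atTop.2 <| hgf.abs.eventually (ge_mem_nhds (by simpa using half_pos hδ))
  have hg' : ∀ᶠ t in atTop, ∀ s ≥ t, ‖g' s‖ ≤ η :=
    eventually_forall_ge_atTop.2 <| hg'lim.norm.eventually (ge_mem_nhds (by rw [norm_zero]; positivity))
  filter_upwards [hgf', hg', eventually_ge_atTop 0] with t hgf_t hg'_t ht0 s hs
  have hlip : ‖g s - g t‖ ≤ η * T := by
    have := norm_image_sub_le_of_norm_deriv_le_segment' (fun x _ => (hg x).hasDerivWithinAt)
      (fun x hx => hg'_t x hx.1) s hs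
    exact this.trans (mul_le_mul_of_nonneg_left (by linarith [hs.2]) (by positivity))
  calc |g t ⬝ᵥ f s| = |g s ⬝ᵥ f s + (g t - g s) ⬝ᵥ f s| := by rw [sub_dotProduct, add_sub_cancel]
    _ ≤ |g s ⬝ᵥ f s| + |(g t - g s) ⬝ᵥ f s| := abs_add_le _ _
    _ ≤ δ / 2 + Fintype.card ι * ((η * T) * M) := by
        gcongr
        · exact hgf_t s hs.1
        · refine (abs_dotProduct_le _ _).trans ?_
          gcongr
          · rw [norm_sub_rev]; exact hlip
          · exact hM s (ht0.trans hs.1)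
    _ = δ / 2 + K * η := by ring
    _ ≤ δ := by linarith

theorem tendsto_zero_of_isPE {ι : Type*} [Fintype ι] [DecidableEq ι] {g g' f : ℝ → ι → ℝ}
    {M : ℝ} (hg : ∀ t, HasDerivAt g (g' t) t) (hf : AEStronglyMeasurable f)
    (hM : ∀ t ≥ 0, ‖f t‖ ≤ M) (hgf : Tendsto (fun t => g t ⬝ᵥ f t) atTop (nhds 0))
    (hg'lim : Tendsto g' atTop (nhds 0)) (hPE : IsPE f) :
    Tendsto g atTop (nhds 0) := by
  obtain ⟨ε, hε, t₀, T₀, hT₀, hexc⟩ := hPE.exists_mul_sq_norm_le hf hM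
  refine tendsto_zero_iff_norm_tendsto_zero.2 <| Metric.tendsto_nhds.2 fun η hη => ?_
  have hδ : 0 < √ε * η / 2 := by positivity
  filter_upwards [eventually_forall_Icc_abs_dotProduct_le hg hM hgf hg'lim hT₀.le hδ,
    eventually_ge_atTop t₀] with t hwindow ht
  have h := hexc t ht (g t) _ hwindow
  rw [div_pow, mul_pow, Real.sq_sqrt hε.le, mul_div_assoc, ← div_pow] at h
  have hsmall : ‖g t‖ ≤ η / 2 :=
    (pow_le_pow_iff_left₀ (norm_nonneg _) (by positivity) two_ne_zero).1
      (le_of_mul_le_mul_left h hε)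
  rw [Real.dist_eq, sub_zero, abs_norm]
  linarith

theorem stmt6_general {n : ℕ} (g g' f : ℝ → Fin n → ℝ)
    (hg : ∀ t, HasDerivAt g (g' t) t)
    (hfbdd : ∃ M : ℝ, ∀ t ≥ (0 : ℝ), ‖f t‖ ≤ M)
    (hfpc : ∃ D : Set ℝ, D.Countable ∧ ∀ t ∉ D, ContinuousAt f t)
    (hgf : Tendsto (fun t => g t ⬝ᵥ f t) atTop (nhds 0))
    (hg'lim : Tendsto g' atTop (nhds 0))
    (hPE : IsPE f) :
    Tendsto g atTop (nhds 0) := by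
  obtain ⟨M, hM⟩ := hfbdd
  obtain ⟨D, hD, hfD⟩ := hfpc
  exact tendsto_zero_of_isPE hg (aestronglyMeasurable_of_continuousAt_of_countable hD hfD) hM hgf
    hg'lim hPE

theorem stmt6 {n : ℕ} (g g' f : ℝ → Fin n → ℝ)
    (hg : ∀ t, HasDerivAt g (g' t) t) (hg'cont : Continuous g')
    (hfbdd : ∃ M : ℝ, ∀ t ≥ (0 : ℝ), ‖f t‖ ≤ M)
    (hfpc : ∃ D : Set ℝ, D.Countable ∧ ∀ t ∉ D, ContinuousAt f t)
    (hgf : Tendsto (fun t => g t ⬝ᵥ f t) atTop (nhds 0))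
    (hg'lim : Tendsto g' atTop (nhds 0))
    (hPE : IsPE f) :
    Tendsto g atTop (nhds 0) :=
  stmt6_general g g' f hg hfbdd hfpc hgf hg'lim hPE
end

section
/- Let ω₁, …, ω_l > 0 be distinct and for each i let f_i(t) = (C_i sin(ω_i t + ψ_i), C_i cos(ω_i t + ψ_i)) with C_i ≠ 0. If for each pair i ≠ j, (1/T₀) ∫_t^{t+T₀} f_i(s) f_j(s)ᵀ ds = 0 for all t ≥ t₀, and each f_i is persistently exciting, then the stacked function v(t) = (f₁(t), …, f_l(t)) ∈ ℝ^{2l} is persistently exciting. -/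
set_option maxHeartbeats 1000000
open Matrix Filter intervalIntegral

lemma sinusoid_integral_lb (ω ψ a b t T : ℝ) (hω : 0 < ω) :
    (a^2+b^2) * (T/2 - 1/ω) ≤
      ∫ s in t..t+T, (a * Real.sin (ω*s+ψ) + b * Real.cos (ω*s+ψ))^2 := by
  set F : ℝ → ℝ := fun s => (a^2+b^2)*s/2 + (b^2-a^2)/(4*ω) * Real.sin (2*(ω*s+ψ))
      - a*b/(2*ω) * Real.cos (2*(ω*s+ψ)) with hFdef
  have hF : ∀ s : ℝ, HasDerivAt F ((a * Real.sin (ω*s+ψ) + b * Real.cos (ω*s+ψ))^2) s := by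
    intro s
    have h1 : HasDerivAt (fun s : ℝ => ω*s+ψ) ω s := by
      simpa using ((hasDerivAt_id s).const_mul ω).add_const ψ
    have h2 : HasDerivAt (fun s : ℝ => 2*(ω*s+ψ)) (2*ω) s := by
      simpa [mul_comm] using h1.const_mul 2
    have hsin : HasDerivAt (fun s : ℝ => Real.sin (2*(ω*s+ψ)))
        (Real.cos (2*(ω*s+ψ)) * (2*ω)) s := (Real.hasDerivAt_sin _).comp s h2
    have hcos : HasDerivAt (fun s : ℝ => Real.cos (2*(ω*s+ψ)))
        (-Real.sin (2*(ω*s+ψ)) * (2*ω)) s := (Real.hasDerivAt_cos _).comp s h2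
    have hall := ((((hasDerivAt_id s).const_mul (a^2+b^2)).div_const 2).add
        (hsin.const_mul ((b^2-a^2)/(4*ω)))).sub (hcos.const_mul (a*b/(2*ω)))
    refine hall.congr_deriv ?_
    symm
    have hs2 : Real.sin (2*(ω*s+ψ)) = 2 * Real.sin (ω*s+ψ) * Real.cos (ω*s+ψ) :=
      Real.sin_two_mul _
    have hc2 : Real.cos (2*(ω*s+ψ)) = 2 * Real.cos (ω*s+ψ)^2 - 1 := Real.cos_two_mul _
    have hpy : Real.sin (ω*s+ψ)^2 + Real.cos (ω*s+ψ)^2 = 1 := Real.sin_sq_add_cos_sq _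
    rw [hs2, hc2]
    field_simp
    linear_combination (8*a^2) * hpy
  have hint : IntervalIntegrable
      (fun s => (a * Real.sin (ω*s+ψ) + b * Real.cos (ω*s+ψ))^2) MeasureTheory.volume t (t+T) :=
    Continuous.intervalIntegrable (by continuity) t (t+T)
  have heq := intervalIntegral.integral_eq_sub_of_hasDerivAt (fun s _ => hF s) hint
  rw [heq]
  set sA := Real.sin (2*(ω*(t+T)+ψ))
  set sB := Real.sin (2*(ω*t+ψ))
  set cA := Real.cos (2*(ω*(t+T)+ψ))
  set cB := Real.cos (2*(ω*t+ψ))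
  have hsA1 : sA ≤ 1 := Real.sin_le_one _
  have hsA2 : -1 ≤ sA := Real.neg_one_le_sin _
  have hsB1 : sB ≤ 1 := Real.sin_le_one _
  have hsB2 : -1 ≤ sB := Real.neg_one_le_sin _
  have hcA1 : cA ≤ 1 := Real.cos_le_one _
  have hcA2 : -1 ≤ cA := Real.neg_one_le_cos _
  have hcB1 : cB ≤ 1 := Real.cos_le_one _
  have hcB2 : -1 ≤ cB := Real.neg_one_le_cos _
  have key : 0 ≤ (b^2-a^2)*(sA-sB) - 2*(a*b)*(cA-cB) + 4*(a^2+b^2) := by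
    nlinarith [mul_nonneg (sq_nonneg b) (by linarith : (0:ℝ) ≤ sA - sB + 2),
      mul_nonneg (sq_nonneg a) (by linarith : (0:ℝ) ≤ 2 - (sA - sB)),
      mul_nonneg (sq_nonneg (a+b)) (by linarith : (0:ℝ) ≤ 2 - (cA - cB)),
      mul_nonneg (sq_nonneg (a-b)) (by linarith : (0:ℝ) ≤ (cA - cB) + 2)]
  have main : F (t+T) - F t - (a^2+b^2) * (T/2 - 1/ω)
      = ((b^2-a^2)*(sA-sB) - 2*(a*b)*(cA-cB) + 4*(a^2+b^2)) / (4*ω) := by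
    simp only [hFdef, sA, sB, cA, cB]
    field_simp
    ring
  have : 0 ≤ F (t+T) - F t - (a^2+b^2) * (T/2 - 1/ω) := by
    rw [main]; positivity
  linarith


theorem stmt8 {l : ℕ} (ω C ψ : Fin l → ℝ)
    (hω : ∀ i, 0 < ω i) (hdist : Function.Injective ω) (hC : ∀ i, C i ≠ 0)
    (f : Fin l → ℝ → Fin 2 → ℝ)
    (hf : ∀ i t, f i t = ![C i * Real.sin (ω i * t + ψ i), C i * Real.cos (ω i * t + ψ i)])
    (t₀ T₀ : ℝ) (ht₀ : 0 ≤ t₀) (hT₀ : 0 < T₀)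
    (hcross : ∀ i j : Fin l, i ≠ j → ∀ t ≥ t₀, ∀ p q : Fin 2,
      T₀⁻¹ * ∫ s in t..(t + T₀), f i s p * f j s q = 0)
    (hPE : ∀ i, IsPE (f i)) :
    IsPE (fun t (ip : Fin l × Fin 2) => f ip.1 t ip.2) := by
  have hcont : ∀ i p, Continuous fun s => f i s p := by
    intro i p
    fin_cases p
    · refine Continuous.congr (f := fun s => C i * Real.sin (ω i * s + ψ i)) (by fun_prop)
        fun s => ?_
      rw [hf]; simp
    · refine Continuous.congr (f := fun s => C i * Real.cos (ω i * s + ψ i)) (by fun_prop)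
        fun s => ?_
      rw [hf]; simp
  have hint : ∀ (i : Fin l) (p : Fin 2) (j : Fin l) (q : Fin 2) (a b : ℝ),
      IntervalIntegrable (fun s => f i s p * f j s q) MeasureTheory.volume a b :=
    fun i p j q a b => ((hcont i p).mul (hcont j q)).intervalIntegrable a b
  have hcrossk : ∀ (i j : Fin l), i ≠ j → ∀ p q : Fin 2, ∀ (m : ℕ), ∀ t ≥ t₀,
      ∫ s in t..t + (m:ℝ)*T₀, f i s p * f j s q = 0 := by
    intro i j hij p q m
    induction m with
    | zero => intro t ht; simp
    | succ n ih =>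
      intro t ht
      have h1 := ih t ht
      have h2 : ∫ s in (t + (n:ℝ)*T₀)..(t + (n:ℝ)*T₀ + T₀), f i s p * f j s q = 0 := by
        have hge : t + (n:ℝ)*T₀ ≥ t₀ := by
          have : (0:ℝ) ≤ (n:ℝ)*T₀ := mul_nonneg n.cast_nonneg hT₀.le
          linarith
        have := hcross i j hij (t + (n:ℝ)*T₀) hge p q
        rcases mul_eq_zero.mp this with h | h
        · exact absurd h (inv_ne_zero hT₀.ne')
        · exact h
      have hadj := intervalIntegral.integral_add_adjacent_intervals
        (hint i p j q t (t + (n:ℝ)*T₀)) (hint i p j q (t + (n:ℝ)*T₀) (t + (n:ℝ)*T₀ + T₀))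
      have he : t + (n:ℝ)*T₀ + T₀ = t + ((n:ℕ)+1 : ℕ)*T₀ := by push_cast; ring
      rw [← he]
      rw [← hadj, h1, h2, add_zero]
  rcases Nat.eq_zero_or_pos l with hl | hl
  · -- trivial case: empty index type
    subst hl
    refine ⟨1, one_pos, t₀, ht₀, T₀, hT₀, fun t ht => Matrix.posSemidef_iff_dotProduct_mulVec.mpr ⟨?_, ?_⟩⟩
    · ext ⟨i, p⟩; exact i.elim0
    · intro x
      have : ∀ u : Fin 0 × Fin 2, False := fun u => u.1.elim0
      simp [dotProduct, Finset.univ_eq_empty]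
  · have hne : Nonempty (Fin l) := ⟨⟨0, hl⟩⟩
    set ε : ℝ := (Finset.univ.inf' Finset.univ_nonempty fun i => C i ^ 2) / 4 with hεdef
    have hεpos : 0 < ε := by
      have : ∀ i ∈ (Finset.univ : Finset (Fin l)), 0 < C i ^ 2 := by
        intro i _
        exact pow_two_pos_of_ne_zero (hC i)
      have := (Finset.lt_inf'_iff (Finset.univ_nonempty)).mpr this
      simp only [hεdef]
      linarith
    have hεle : ∀ i, ε ≤ C i ^ 2 / 4 := by
      intro i
      have := Finset.inf'_le (fun i => C i ^ 2) (Finset.mem_univ i)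
      simp only [hεdef]
      linarith
    -- choose the number of periods k
    set K : ℝ := Finset.univ.sup' Finset.univ_nonempty fun i => 4 / ω i with hKdef
    have hKle : ∀ i, 4 / ω i ≤ K := fun i =>
      Finset.le_sup' (fun i => 4 / ω i) (Finset.mem_univ i)
    have hKpos : 0 < K :=
      lt_of_lt_of_le (div_pos (by norm_num) (hω ⟨0, hl⟩)) (hKle ⟨0, hl⟩)
    obtain ⟨k, hk⟩ := exists_nat_gt (K / T₀)
    set T : ℝ := (k:ℝ) * T₀ with hTdef
    have hKT : K < T := by
      rw [hTdef]
      calc K = K / T₀ * T₀ := by field_simp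
      _ < (k:ℝ) * T₀ := by exact mul_lt_mul_of_pos_right hk hT₀
    have hTpos : 0 < T := lt_trans hKpos hKT
    have hT4 : ∀ i, 4 / ω i ≤ T := fun i => le_of_lt (lt_of_le_of_lt (hKle i) hKT)
    refine ⟨ε, hεpos, t₀, ht₀, T, hTpos, fun t ht => ?_⟩
    set M : Matrix (Fin l × Fin 2) (Fin l × Fin 2) ℝ :=
      Matrix.of fun ip jq => T⁻¹ * ∫ s in t..(t + T),
        f ip.1 s ip.2 * f jq.1 s jq.2 with hMdef
    show Matrix.PosSemidef (M - ε • 1)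
    have hM0 : ∀ (i j : Fin l) (p q : Fin 2), i ≠ j → M (i,p) (j,q) = 0 := by
      intro i j p q hij
      have := hcrossk i j hij p q k t ht
      simp only [hMdef, Matrix.of_apply, ← hTdef] at *
      rw [this, mul_zero]
    refine Matrix.posSemidef_iff_dotProduct_mulVec.mpr ⟨?_, ?_⟩
    · -- Hermitian
      have h1 : M.IsHermitian := by
        ext u v
        simp only [Matrix.conjTranspose_apply, hMdef, Matrix.of_apply, star_trivial]
        congr 1
        exact intervalIntegral.integral_congr fun s _ => mul_comm _ _
      have h2 : (ε • (1 : Matrix (Fin l × Fin 2) (Fin l × Fin 2) ℝ)).IsHermitian := by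
        show _ = _
        rw [Matrix.conjTranspose_smul, Matrix.conjTranspose_one]
        norm_num
      exact h1.sub h2
    · intro x
      rw [star_trivial]
      have hg : ∀ i : Fin l, ε * (x (i,0)^2 + x (i,1)^2) ≤
          T⁻¹ * ∫ s in t..t+T, (x (i,0) * f i s 0 + x (i,1) * f i s 1)^2 := by
        intro i
        set a := x (i,0) * C i with hadef
        set b := x (i,1) * C i with hbdef
        have hcongr : (∫ s in t..t+T, (x (i,0) * f i s 0 + x (i,1) * f i s 1)^2)
            = ∫ s in t..t+T,
              (a * Real.sin (ω i * s + ψ i) + b * Real.cos (ω i * s + ψ i))^2 :=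
          intervalIntegral.integral_congr fun s _ => by
            rw [hf]; simp only [hadef, hbdef, Matrix.cons_val_zero, Matrix.cons_val_one,
              Matrix.head_cons]; ring
        have hlb := sinusoid_integral_lb (ω i) (ψ i) a b t T (hω i)
        have hab : a^2 + b^2 = C i ^2 * (x (i,0)^2 + x (i,1)^2) := by
          rw [hadef, hbdef]; ring
        have hTω : T/4 ≤ T/2 - 1/(ω i) := by
          have h4 : 4 / ω i ≤ T := hT4 i
          have h5 : 1 / ω i ≤ T / 4 := by
            rw [div_le_div_iff₀ (hω i) (by norm_num : (0:ℝ) < 4)]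
            rw [div_le_iff₀ (hω i)] at h4
            linarith
          linarith
        have h1 : (a^2+b^2) * (T/4) ≤
            ∫ s in t..t+T, (x (i,0) * f i s 0 + x (i,1) * f i s 1)^2 := by
          rw [hcongr]
          nlinarith [sq_nonneg a, sq_nonneg b]
        calc ε * (x (i,0)^2 + x (i,1)^2)
            ≤ (C i^2/4) * (x (i,0)^2 + x (i,1)^2) :=
              mul_le_mul_of_nonneg_right (hεle i) (by positivity)
          _ = T⁻¹ * ((C i^2 * (x (i,0)^2 + x (i,1)^2)) * (T/4)) := by
              field_simp
          _ ≤ T⁻¹ * ∫ s in t..t+T, (x (i,0) * f i s 0 + x (i,1) * f i s 1)^2 := by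
              refine mul_le_mul_of_nonneg_left ?_ (inv_nonneg.mpr hTpos.le)
              rw [← hab]; exact h1
      have hform : x ⬝ᵥ M *ᵥ x = ∑ i : Fin l,
          T⁻¹ * ∫ s in t..t+T, (x (i,0) * f i s 0 + x (i,1) * f i s 1)^2 := by
        have e1 : x ⬝ᵥ M *ᵥ x = ∑ i : Fin l, ∑ p : Fin 2, ∑ j : Fin l, ∑ q : Fin 2,
            x (i,p) * (M (i,p) (j,q) * x (j,q)) := by
          simp [dotProduct, Matrix.mulVec, Finset.mul_sum, Fintype.sum_prod_type, mul_add]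
        rw [e1]
        refine Finset.sum_congr rfl fun i _ => ?_
        rw [Finset.sum_comm]
        rw [Finset.sum_eq_single i (fun j _ hji =>
          Finset.sum_eq_zero fun p _ => Finset.sum_eq_zero fun q _ => by
            rw [hM0 i j p q (Ne.symm hji), zero_mul, mul_zero])
          (fun h => absurd (Finset.mem_univ i) h)]
        have hIexp : (∫ s in t..t+T, (x (i,0) * f i s 0 + x (i,1) * f i s 1)^2)
            = x (i,0) * x (i,0) * (∫ s in t..t+T, f i s 0 * f i s 0)
            + (x (i,0) * x (i,1)) * (∫ s in t..t+T, f i s 0 * f i s 1)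
            + ((x (i,1) * x (i,0)) * (∫ s in t..t+T, f i s 1 * f i s 0)
            + x (i,1) * x (i,1) * (∫ s in t..t+T, f i s 1 * f i s 1)) := by
          rw [← intervalIntegral.integral_const_mul, ← intervalIntegral.integral_const_mul,
            ← intervalIntegral.integral_const_mul, ← intervalIntegral.integral_const_mul,
            ← intervalIntegral.integral_add ((hint i 0 i 0 t (t+T)).const_mul _)
              ((hint i 0 i 1 t (t+T)).const_mul _),
            ← intervalIntegral.integral_add ((hint i 1 i 0 t (t+T)).const_mul _)
              ((hint i 1 i 1 t (t+T)).const_mul _),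
            ← intervalIntegral.integral_add
              (((hint i 0 i 0 t (t+T)).const_mul _).add ((hint i 0 i 1 t (t+T)).const_mul _))
              (((hint i 1 i 0 t (t+T)).const_mul _).add ((hint i 1 i 1 t (t+T)).const_mul _))]
          exact intervalIntegral.integral_congr fun s _ => by ring
        rw [hIexp]
        simp only [Fin.sum_univ_two, hMdef, Matrix.of_apply]
        ring
      rw [Matrix.sub_mulVec, dotProduct_sub, Matrix.smul_mulVec,
        Matrix.one_mulVec, dotProduct_smul, smul_eq_mul]
      have hxx : x ⬝ᵥ x = ∑ i : Fin l, (x (i,0)^2 + x (i,1)^2) := by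
        simp [dotProduct, Fintype.sum_prod_type, Fin.sum_univ_two, sq]
      rw [hform, hxx, Finset.mul_sum, sub_nonneg]
      exact Finset.sum_le_sum fun i _ => hg i
end

section
/- (Barbalat's lemma) If f : [0,∞) → ℝ is uniformly continuous and lim_{t→∞} ∫₀^t f(s) ds exists and is finite, then lim_{t→∞} f(t) = 0. -/
/-!
If `f(t)` stayed away from `0` along a sequence `tₙ → ∞`, uniform continuity would keep `f`
near `f(tₙ)` on windows `[tₙ, tₙ + h]` of a fixed length, so the integrals over those windows
would stay away from `0`. But they are differences `F(tₙ + h) - F(tₙ)` of the convergent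
primitive `F(t) = ∫₀ᵗ f`, hence tend to `0`.
-/

open Filter intervalIntegral Set

lemma tendsto_intervalIntegral_add_const_zero {f : ℝ → ℝ} {a L : ℝ} (hf : ContinuousOn f (Ici a))
    (hL : Tendsto (fun t => ∫ s in a..t, f s) atTop (nhds L)) (h : ℝ) :
    Tendsto (fun t => ∫ s in t..t + h, f s) atTop (nhds 0) := by
  have hdiff : Tendsto (fun t => (∫ s in a..t + h, f s) - ∫ s in a..t, f s) atTop (nhds 0) := by
    simpa using (hL.comp (tendsto_atTop_add_const_right _ h tendsto_id)).sub hL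
  have hint : ∀ b ≥ a, IntervalIntegrable f MeasureTheory.volume a b := fun b hb =>
    (hf.mono Icc_subset_Ici_self).intervalIntegrable_of_Icc hb
  refine hdiff.congr' ?_
  filter_upwards [eventually_ge_atTop a, eventually_ge_atTop (a - h)] with t ht hth
  exact integral_interval_sub_left (hint _ (by linarith)) (hint t ht)

lemma mul_abs_le_abs_intervalIntegral_add {f : ℝ → ℝ} {t h η : ℝ} (hh : 0 ≤ h)
    (hf : ContinuousOn f (Icc t (t + h))) (hη : ∀ s ∈ Ioc t (t + h), |f s - f t| ≤ η) :
    h * |f t| ≤ |∫ s in t..t + h, f s| + h * η := by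
  have hdev : |∫ s in t..t + h, (f s - f t)| ≤ η * h := by
    have := norm_integral_le_of_norm_le_const (a := t) (b := t + h) (f := fun s => f s - f t)
      (by simpa only [uIoc_of_le (by linarith : t ≤ t + h), Real.norm_eq_abs] using hη)
    simpa [abs_of_nonneg hh] using this
  rw [integral_sub (hf.intervalIntegrable_of_Icc (by linarith)) intervalIntegrable_const,
    integral_const, smul_eq_mul, add_sub_cancel_left] at hdev
  have htri := abs_sub_abs_le_abs_sub (h * f t) (∫ s in t..t + h, f s)
  rw [abs_sub_comm, abs_mul, abs_of_nonneg hh] at htri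
  linarith

theorem stmt14_general (f : ℝ → ℝ)
    (huc : UniformContinuousOn f (Set.Ici 0))
    (hint : ∃ L : ℝ, Tendsto (fun t => ∫ s in (0 : ℝ)..t, f s) atTop (nhds L)) :
    Tendsto f atTop (nhds 0) := by
  obtain ⟨L, hL⟩ := hint
  have hf : ContinuousOn f (Ici 0) := huc.continuousOn
  refine Metric.tendsto_nhds.2 fun ε hε => ?_
  obtain ⟨δ, hδ, hfδ⟩ := Metric.uniformContinuousOn_iff.1 huc (ε / 2) (half_pos hε)
  have hwindow := Metric.tendsto_nhds.1 (tendsto_intervalIntegral_add_const_zero hf hL (δ / 2))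
    (δ / 2 * (ε / 2)) (by positivity)
  filter_upwards [hwindow, eventually_ge_atTop 0] with t hsmall ht
  have hclose : ∀ s ∈ Ioc t (t + δ / 2), |f s - f t| ≤ ε / 2 := fun s hs => by
    have hst : dist s t < δ := by rw [Real.dist_eq, abs_lt]; constructor <;> linarith [hs.1, hs.2]
    exact (Real.dist_eq _ _ ▸ hfδ s (ht.trans hs.1.le) t ht hst).le
  have hbound := mul_abs_le_abs_intervalIntegral_add (by positivity)
    (hf.mono fun s hs => ht.trans hs.1) hclose
  rw [Real.dist_0_eq_abs] at hsmall ⊢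
  have : δ / 2 * |f t| < δ / 2 * ε := by linarith
  exact lt_of_mul_lt_mul_left this (by positivity)

/-- Barbalat's lemma. -/
theorem stmt14 (f : ℝ → ℝ)
    (hf : ContinuousOn f (Set.Ici 0))
    (huc : UniformContinuousOn f (Set.Ici 0))
    (hint : ∃ L : ℝ, Tendsto (fun t => ∫ s in (0 : ℝ)..t, f s) atTop (nhds L)) :
    Tendsto f atTop (nhds 0) :=
  stmt14_general f huc hint
end
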